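/- Let C be a first-order clause (without equality) blocked by a literal L in F, and let F' and F_C be finite sets of ground instances of clauses of F \ {C} and of C, respectively. Then every propositional assignment satisfying F' can be modified (by repeatedly flipping ground instances of the atom of L) into a propositional assignment satisfying F' ∪ F_C. -/

import Mathlib

/-- First-order terms over variables `V` and function symbols `Fn`. -/
inductive Term (V Fn : Type) : Type
  | var : V → Term V Fn
  | app : Fn → List (Term V Fn) → Term V Fn

/-- A substitution maps variables to terms. -/
abbrev Subst (V Fn : Type) := V → Term V Fn

/-- Applying a substitution to a term. -/
def Term.subst {V Fn : Type} (σ : Subst V Fn) : Term V Fn → Term V Fn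
  | .var v => σ v
  | .app f ts => .app f (ts.attach.map (fun t => Term.subst σ t.1))
  decreasing_by have := List.sizeOf_lt_of_mem t.2; simp at *; omega

/-- The set of variables occurring in a term. -/
def Term.vars {V Fn : Type} : Term V Fn → Set V
  | .var v => {v}
  | .app _ ts => {x | ∃ t ∈ ts.attach, x ∈ Term.vars t.1}
  decreasing_by have := List.sizeOf_lt_of_mem t.2; simp at *; omega

/-- A term is ground if it contains no variables. -/
def Term.IsGround {V Fn : Type} (t : Term V Fn) : Prop := t.vars = ∅

/-- Composition of substitutions: `σ.comp γ` is "first σ, then γ". -/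
def Subst.comp {V Fn : Type} (σ γ : Subst V Fn) : Subst V Fn :=
  fun v => (σ v).subst γ

/-- An atom: a predicate symbol applied to a list of argument terms. -/
structure Atom (V Fn P : Type) where
  pred : P
  args : List (Term V Fn)

/-- A literal: an atom with a polarity (`true` = positive). -/
structure Lit (V Fn P : Type) where
  pol : Bool
  atom : Atom V Fn P

/-- The complement of a literal. -/
def Lit.compl {V Fn P : Type} (l : Lit V Fn P) : Lit V Fn P := ⟨!l.pol, l.atom⟩

def Atom.subst {V Fn P : Type} (σ : Subst V Fn) (A : Atom V Fn P) : Atom V Fn P :=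
  ⟨A.pred, A.args.map (Term.subst σ)⟩

def Lit.subst {V Fn P : Type} (σ : Subst V Fn) (l : Lit V Fn P) : Lit V Fn P :=
  ⟨l.pol, l.atom.subst σ⟩

/-- A clause is a multiset (disjunction) of literals. -/
abbrev Clause (V Fn P : Type) := Multiset (Lit V Fn P)

def Clause.subst {V Fn P : Type} (σ : Subst V Fn) (C : Clause V Fn P) : Clause V Fn P :=
  C.map (Lit.subst σ)

def Atom.vars {V Fn P : Type} (A : Atom V Fn P) : Set V := {x | ∃ t ∈ A.args, x ∈ t.vars}
def Lit.vars {V Fn P : Type} (l : Lit V Fn P) : Set V := l.atom.vars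
def Clause.vars {V Fn P : Type} (C : Clause V Fn P) : Set V := {x | ∃ l ∈ C, x ∈ l.vars}

/-- A clause is ground if it contains no variables. -/
def Clause.IsGround {V Fn P : Type} (C : Clause V Fn P) : Prop := C.vars = ∅

/-- A substitution `σ` unifies a list of literals if it maps them all to the same literal. -/
def IsUnifier {V Fn P : Type} (σ : Subst V Fn) (ls : List (Lit V Fn P)) : Prop :=
  ∀ l₁ ∈ ls, ∀ l₂ ∈ ls, l₁.subst σ = l₂.subst σ

/-- A most general unifier: every unifier factors through it. -/
def IsMGU {V Fn P : Type} (σ : Subst V Fn) (ls : List (Lit V Fn P)) : Prop :=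
  IsUnifier σ ls ∧ ∀ τ, IsUnifier τ ls → ∃ γ, σ.comp γ = τ

/-- Validity of an equality-free clause: it contains a complementary pair of literals. -/
def Clause.ValidEF {V Fn P : Type} (C : Clause V Fn P) : Prop :=
  ∃ A : Atom V Fn P, (⟨true, A⟩ : Lit V Fn P) ∈ C ∧ (⟨false, A⟩ : Lit V Fn P) ∈ C

/-- `C` (written as `L ∨ C'`) is blocked by `L` in `F`: all `L`-resolvents with clauses
of `F \ {L ∨ C'}` are valid. -/
def BlockedEF {V Fn P : Type} (L : Lit V Fn P) (C' : Clause V Fn P)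
    (F : Set (Clause V Fn P)) : Prop :=
  ∀ D ∈ F, D ≠ L ::ₘ C' → ∀ Ns Drest : Clause V Fn P, Ns + Drest = D → Ns ≠ 0 →
    ∀ σ : Subst V Fn, IsMGU σ (L :: (Ns.map Lit.compl).toList) →
      Clause.ValidEF (C'.subst σ + Drest.subst σ)

/-- A propositional assignment on (ground) atoms. -/
abbrev PAssign (V Fn P : Type) := Atom V Fn P → Bool

def litTrue {V Fn P : Type} (α : PAssign V Fn P) (l : Lit V Fn P) : Prop :=
  α l.atom = l.pol

/-- Propositional satisfaction of a (ground) clause. -/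
def satC {V Fn P : Type} (α : PAssign V Fn P) (C : Clause V Fn P) : Prop :=
  ∃ l ∈ C, litTrue α l

/-- A first-order interpretation. -/
structure Interp (Fn P : Type) : Type 1 where
  dom : Type
  nonempty : Nonempty dom
  fn : Fn → List dom → dom
  pr : P → List dom → Prop

def Term.eval {V Fn P : Type} (I : Interp Fn P) (ρ : V → I.dom) : Term V Fn → I.dom
  | .var v => ρ v
  | .app f ts => I.fn f (ts.attach.map (fun t => Term.eval I ρ t.1))
  decreasing_by have := List.sizeOf_lt_of_mem t.2; simp at *; omega

def litHolds {V Fn P : Type} (I : Interp Fn P) (ρ : V → I.dom) (l : Lit V Fn P) : Prop :=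
  l.pol = true ↔ I.pr l.atom.pred (l.atom.args.map (Term.eval I ρ))

def clauseHolds {V Fn P : Type} (I : Interp Fn P) (ρ : V → I.dom) (C : Clause V Fn P) : Prop :=
  ∃ l ∈ C, litHolds I ρ l

/-- First-order satisfiability of a CNF formula (clauses implicitly universally quantified). -/
def SatEF {V Fn P : Type} (F : Set (Clause V Fn P)) : Prop :=
  ∃ I : Interp Fn P, ∀ C ∈ F, ∀ ρ : V → I.dom, clauseHolds I ρ C


open Classical in
/-- Flip the truth value of the atom `A0`. -/
noncomputable def flipAtom {V Fn P : Type} (α : PAssign V Fn P) (A0 : Atom V Fn P) :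
    PAssign V Fn P :=
  fun A => if A = A0 then !(α A) else α A

/-!
If a ground instance `Cτ` of the blocked clause `C = L ∨ C'` is false under `β`, flip the atom
of `Lτ`. A satisfied ground instance `Dτ'` of another clause can only become false if its true
literal was `¬Lτ`. In that case `Cτ` and `Dτ'` resolve on `Lτ`, and through a most general
unifier (which exists by Robinson's algorithm) this resolvent is an instance of an `L`-resolvent
of `C`, hence valid. So `β` makes one of its literals true; it is not in the false `C'τ`, so it is
a literal of `Dτ'` other than `¬Lτ`, and the flip leaves it true. Each flip turns one more atom
occurring in `FC` to the polarity of `L` and none back, so the flipping stops, and it stops only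
when every clause of `FC` is satisfied.
-/

namespace Term
variable {V Fn : Type}

theorem ind {motive : Term V Fn → Prop} (var : ∀ v, motive (.var v))
    (app : ∀ f ts, (∀ t ∈ ts, motive t) → motive (.app f ts)) : ∀ t, motive t
  | .var v => var v
  | .app f ts => app f ts fun t _ => ind var app t
  decreasing_by have := List.sizeOf_lt_of_mem (by assumption); simp at *; omega

@[simp] theorem subst_var (σ : Subst V Fn) (v : V) : (Term.var v).subst σ = σ v := by
  simp [Term.subst]

@[simp] theorem subst_app (σ : Subst V Fn) (f : Fn) (ts : List (Term V Fn)) :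
    (Term.app f ts).subst σ = .app f (ts.map (Term.subst σ)) := by
  rw [Term.subst]; simp

@[simp] theorem vars_var (v : V) : (Term.var v : Term V Fn).vars = {v} := by
  simp [Term.vars]

theorem mem_vars_app {x : V} {f : Fn} {ts : List (Term V Fn)} :
    x ∈ (Term.app f ts).vars ↔ ∃ t ∈ ts, x ∈ t.vars := by
  rw [Term.vars]
  exact ⟨fun ⟨t, _, h⟩ => ⟨t.1, t.2, h⟩, fun ⟨t, ht, h⟩ => ⟨⟨t, ht⟩, List.mem_attach _ _, h⟩⟩

theorem subst_subst (σ γ : Subst V Fn) (t : Term V Fn) :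
    (t.subst σ).subst γ = t.subst (σ.comp γ) := by
  induction t using Term.ind with
  | var v => simp [Subst.comp]
  | app f ts ih => simpa using List.map_congr_left ih

theorem subst_congr {σ σ' : Subst V Fn} {t : Term V Fn}
    (h : ∀ v ∈ t.vars, σ v = σ' v) : t.subst σ = t.subst σ' := by
  induction t using Term.ind with
  | var v => simpa using h v
  | app f ts ih =>
    simpa using List.map_congr_left fun t ht => ih t ht fun v hv => h v (mem_vars_app.2 ⟨t, ht, hv⟩)

theorem subst_eq_self {σ : Subst V Fn} {t : Term V Fn} (h : ∀ v ∈ t.vars, σ v = .var v) :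
    t.subst σ = t := by
  induction t using Term.ind with
  | var v => simpa using h v
  | app f ts ih =>
    simpa using List.map_congr_left fun t ht => ih t ht fun v hv => h v (mem_vars_app.2 ⟨t, ht, hv⟩)

theorem mem_vars_subst {σ : Subst V Fn} {t : Term V Fn} {x : V} :
    x ∈ (t.subst σ).vars ↔ ∃ v ∈ t.vars, x ∈ (σ v).vars := by
  induction t using Term.ind with
  | var v => simp
  | app f ts ih =>
    simp only [subst_app, mem_vars_app, List.mem_map, exists_exists_and_eq_and]
    constructor
    · rintro ⟨u, hu, hx⟩
      obtain ⟨v, hv, hxv⟩ := (ih u hu).1 hx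
      exact ⟨v, ⟨u, hu, hv⟩, hxv⟩
    · rintro ⟨v, ⟨u, hu, hvu⟩, hxv⟩
      exact ⟨u, hu, (ih u hu).2 ⟨v, hvu, hxv⟩⟩

theorem vars_finite (t : Term V Fn) : t.vars.Finite := by
  induction t using Term.ind with
  | var v => simp
  | app f ts ih =>
    have : (Term.app f ts).vars = ⋃ t ∈ {s | s ∈ ts}, t.vars := by
      ext x; simp [mem_vars_app]
    exact this ▸ (List.finite_toSet ts).biUnion ih

def size : Term V Fn → ℕ
  | .var _ => 1
  | .app _ ts => 1 + (ts.attach.map fun t => size t.1).sum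
  decreasing_by have := List.sizeOf_lt_of_mem t.2; simp at *; omega

@[simp] theorem size_var (v : V) : (Term.var v : Term V Fn).size = 1 := by simp [size]

@[simp] theorem size_app (f : Fn) (ts : List (Term V Fn)) :
    (Term.app f ts).size = 1 + (ts.map size).sum := by
  rw [size]; simp

theorem size_pos (t : Term V Fn) : 0 < t.size := by
  cases t <;> simp

theorem size_lt_size_app {t : Term V Fn} {f : Fn} {ts : List (Term V Fn)} (ht : t ∈ ts) :
    t.size < (Term.app f ts).size := by
  have := List.le_sum_of_mem (List.mem_map_of_mem (f := size) ht)
  simp only [size_app]; omega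

theorem size_le_size_subst {σ : Subst V Fn} {t : Term V Fn} {x : V} (hx : x ∈ t.vars) :
    (σ x).size ≤ (t.subst σ).size := by
  induction t using Term.ind with
  | var v => simp_all
  | app f ts ih =>
    obtain ⟨u, hu, hxu⟩ := mem_vars_app.1 hx
    rw [subst_app]
    exact (ih u hu hxu).trans (size_lt_size_app (List.mem_map_of_mem hu)).le

theorem eq_var_of_subst_eq {σ : Subst V Fn} {t : Term V Fn} {x : V} (hx : x ∈ t.vars)
    (h : σ x = t.subst σ) : t = .var x := by
  cases t with
  | var y => simp_all
  | app f ts =>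
    obtain ⟨u, hu, hxu⟩ := mem_vars_app.1 hx
    have := (size_le_size_subst (σ := σ) hxu).trans_lt
      (size_lt_size_app (f := f) (List.mem_map_of_mem (f := Term.subst σ) hu))
    rw [← subst_app, ← h] at this
    exact (lt_irrefl _ this).elim

end Term

namespace Subst
variable {V Fn : Type}

theorem comp_assoc (σ₁ σ₂ σ₃ : Subst V Fn) :
    (σ₁.comp σ₂).comp σ₃ = σ₁.comp (σ₂.comp σ₃) := by
  funext v; simp [Subst.comp, Term.subst_subst]

@[simp] theorem var_comp (γ : Subst V Fn) : Subst.comp (fun v => .var v) γ = γ := by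
  funext v; simp [Subst.comp]

end Subst

section Single
variable {V Fn : Type} [DecidableEq V]

def Subst.single (x : V) (t : Term V Fn) : Subst V Fn :=
  fun v => if v = x then t else .var v

theorem Subst.single_comp_of_eq {x : V} {t : Term V Fn} {δ : Subst V Fn}
    (h : δ x = t.subst δ) : (Subst.single x t).comp δ = δ := by
  funext v
  by_cases hv : v = x
  · subst hv; simp [Subst.comp, Subst.single, h]
  · simp [Subst.comp, Subst.single, hv]

theorem Term.mem_vars_subst_single {x y : V} {s t : Term V Fn}
    (hy : y ∈ (s.subst (Subst.single x t)).vars) : y ∈ t.vars ∨ (y ∈ s.vars ∧ y ≠ x) := by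
  obtain ⟨v, hv, hyv⟩ := Term.mem_vars_subst.1 hy
  by_cases hvx : v = x
  · simp_all [Subst.single]
  · simp only [Subst.single, if_neg hvx, Term.vars_var, Set.mem_singleton_iff] at hyv
    exact Or.inr ⟨hyv ▸ hv, hyv ▸ hvx⟩

end Single

theorem List.map_eq_map_iff_forall_zip {α β : Type*} {g : α → β} {l₁ l₂ : List α} :
    l₁.map g = l₂.map g ↔ l₁.length = l₂.length ∧ ∀ q ∈ l₁.zip l₂, g q.1 = g q.2 := by
  rw [← List.forall₂_eq_eq_eq, List.forall₂_map_left_iff, List.forall₂_map_right_iff,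
    List.forall₂_iff_zip]
  simp only [Prod.forall]

section Unification
variable {V Fn : Type}

def Unifies (σ : Subst V Fn) (E : List (Term V Fn × Term V Fn)) : Prop :=
  ∀ p ∈ E, p.1.subst σ = p.2.subst σ

def IsMGUEqns (σ : Subst V Fn) (E : List (Term V Fn × Term V Fn)) : Prop :=
  Unifies σ E ∧ ∀ τ, Unifies τ E → ∃ γ, σ.comp γ = τ

def substEqns (θ : Subst V Fn) (E : List (Term V Fn × Term V Fn)) :
    List (Term V Fn × Term V Fn) :=
  E.map fun p => (p.1.subst θ, p.2.subst θ)

def eqnsVars (E : List (Term V Fn × Term V Fn)) : Set V :=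
  {x | ∃ p ∈ E, x ∈ p.1.vars ∨ x ∈ p.2.vars}

def eqnsSize (E : List (Term V Fn × Term V Fn)) : ℕ :=
  (E.map fun p => p.1.size + p.2.size).sum

variable {σ δ θ : Subst V Fn} {E E' : List (Term V Fn × Term V Fn)}

theorem unifies_cons {p : Term V Fn × Term V Fn} :
    Unifies σ (p :: E) ↔ p.1.subst σ = p.2.subst σ ∧ Unifies σ E :=
  List.forall_mem_cons

theorem unifies_append : Unifies σ (E ++ E') ↔ Unifies σ E ∧ Unifies σ E' :=
  List.forall_mem_append

theorem unifies_flatMap {α : Type*} {xs : List α} {f : α → List (Term V Fn × Term V Fn)} :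
    Unifies σ (xs.flatMap f) ↔ ∀ x ∈ xs, Unifies σ (f x) :=
  ⟨fun h x hx p hp => h p (List.mem_flatMap.2 ⟨x, hx, hp⟩),
    fun h p hp => let ⟨x, hx, hp⟩ := List.mem_flatMap.1 hp; h x hx p hp⟩

theorem unifies_substEqns : Unifies δ (substEqns θ E) ↔ Unifies (θ.comp δ) E := by
  simp only [Unifies, substEqns, List.forall_mem_map, Term.subst_subst]

theorem isMGUEqns_nil : IsMGUEqns (fun v => .var v) ([] : List (Term V Fn × Term V Fn)) :=
  ⟨by simp [Unifies], fun τ _ => ⟨τ, Subst.var_comp τ⟩⟩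

theorem IsMGUEqns.of_unifies_iff (h : ∀ δ, Unifies δ E ↔ Unifies δ E') (hσ : IsMGUEqns σ E) :
    IsMGUEqns σ E' :=
  ⟨(h σ).1 hσ.1, fun τ hτ => hσ.2 τ ((h τ).2 hτ)⟩

theorem unifies_cons_swap {s t : Term V Fn} :
    Unifies δ ((s, t) :: E) ↔ Unifies δ ((t, s) :: E) := by
  simp [unifies_cons, eq_comm]

theorem unifies_cons_app_iff {f : Fn} {ss ts : List (Term V Fn)} (hlen : ss.length = ts.length) :
    Unifies δ ((.app f ss, .app f ts) :: E) ↔ Unifies δ (ss.zip ts ++ E) := by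
  rw [unifies_cons, unifies_append]
  simp [List.map_eq_map_iff_forall_zip, hlen, Unifies]

theorem isMGUEqns_cons_var [DecidableEq V] {x : V} {t : Term V Fn} (hx : x ∉ t.vars)
    (hσ : IsMGUEqns σ (substEqns (Subst.single x t) E)) :
    IsMGUEqns ((Subst.single x t).comp σ) ((.var x, t) :: E) := by
  have ht : t.subst (Subst.single x t) = t :=
    Term.subst_eq_self fun v hv => if_neg (ne_of_mem_of_not_mem hv hx)
  refine ⟨unifies_cons.2 ⟨?_, unifies_substEqns.1 hσ.1⟩, fun τ hτ => ?_⟩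
  · rw [← Term.subst_subst, ← Term.subst_subst, ht]
    simp [Subst.single]
  · obtain ⟨hτx, hτE⟩ := unifies_cons.1 hτ
    have hτ' := Subst.single_comp_of_eq (by simpa using hτx)
    obtain ⟨γ, hγ⟩ := hσ.2 τ (unifies_substEqns.2 (by rwa [hτ']))
    exact ⟨γ, by rw [Subst.comp_assoc, hγ, hτ']⟩

theorem eqnsVars_finite (E : List (Term V Fn × Term V Fn)) : (eqnsVars E).Finite := by
  have : eqnsVars E = ⋃ p ∈ {q | q ∈ E}, p.1.vars ∪ p.2.vars := by
    ext x; simp [eqnsVars]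
  exact this ▸ (List.finite_toSet E).biUnion fun p _ => (p.1.vars_finite).union p.2.vars_finite

theorem eqnsVars_subset_cons {p : Term V Fn × Term V Fn} : eqnsVars E ⊆ eqnsVars (p :: E) :=
  fun _ ⟨q, hq, hx⟩ => ⟨q, List.mem_cons_of_mem _ hq, hx⟩

theorem eqnsVars_cons_swap {s t : Term V Fn} :
    eqnsVars ((s, t) :: E) = eqnsVars ((t, s) :: E) := by
  ext x; simp [eqnsVars, or_comm]

theorem eqnsVars_substEqns_ssubset [DecidableEq V] {x : V} {t : Term V Fn} (hx : x ∉ t.vars) :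
    eqnsVars (substEqns (Subst.single x t) E) ⊂ eqnsVars ((.var x, t) :: E) := by
  refine ssubset_of_subset_of_ssubset (b := eqnsVars ((.var x, t) :: E) \ {x}) ?_
    (Set.sdiff_singleton_ssubset.2 ⟨(.var x, t), List.mem_cons_self, Or.inl (by simp)⟩)
  rintro y ⟨_, hq, hy⟩
  obtain ⟨p, hp, rfl⟩ := List.mem_map.1 hq
  have hyt : y ∈ t.vars → y ∈ eqnsVars ((.var x, t) :: E) \ {x} := fun hyt =>
    ⟨⟨_, List.mem_cons_self, Or.inr hyt⟩, fun h => hx (h ▸ hyt)⟩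
  rcases hy with hy | hy <;> rcases Term.mem_vars_subst_single hy with h | ⟨hys, hne⟩
  · exact hyt h
  · exact ⟨⟨p, List.mem_cons_of_mem _ hp, Or.inl hys⟩, hne⟩
  · exact hyt h
  · exact ⟨⟨p, List.mem_cons_of_mem _ hp, Or.inr hys⟩, hne⟩

theorem eqnsVars_zip_subset {f g : Fn} {ss ts : List (Term V Fn)} :
    eqnsVars (ss.zip ts ++ E) ⊆ eqnsVars ((.app f ss, .app g ts) :: E) := by
  rintro y ⟨q, hq, hy⟩
  rcases List.mem_append.1 hq with hq | hq
  · obtain ⟨h₁, h₂⟩ := List.of_mem_zip hq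
    refine ⟨_, List.mem_cons_self, hy.imp (fun hy => ?_) fun hy => ?_⟩ <;>
      exact Term.mem_vars_app.2 ⟨_, by assumption, hy⟩
  · exact eqnsVars_subset_cons ⟨q, hq, hy⟩

theorem eqnsSize_cons (p : Term V Fn × Term V Fn) :
    eqnsSize (p :: E) = p.1.size + p.2.size + eqnsSize E := by
  simp [eqnsSize]

theorem eqnsSize_lt_cons {p : Term V Fn × Term V Fn} : eqnsSize E < eqnsSize (p :: E) := by
  have := p.1.size_pos
  rw [eqnsSize_cons]; omega

theorem eqnsSize_zip {ss ts : List (Term V Fn)} (hlen : ss.length = ts.length) :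
    eqnsSize (ss.zip ts) = (ss.map Term.size).sum + (ts.map Term.size).sum := by
  have h₁ := congrArg (List.map Term.size) (List.map_fst_zip hlen.le)
  have h₂ := congrArg (List.map Term.size) (List.map_snd_zip hlen.ge)
  rw [List.map_map] at h₁ h₂
  rw [eqnsSize, List.sum_map_add]
  exact congrArg₂ (· + ·) (congrArg List.sum h₁) (congrArg List.sum h₂)

theorem eqnsSize_zip_lt {f g : Fn} {ss ts : List (Term V Fn)} (hlen : ss.length = ts.length) :
    eqnsSize (ss.zip ts ++ E) < eqnsSize ((.app f ss, .app g ts) :: E) := by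
  have := eqnsSize_zip hlen
  simp only [eqnsSize, List.map_append, List.sum_append, List.map_cons, List.sum_cons,
    Term.size_app] at this ⊢
  omega

theorem lex_lt_of_le_of_lt {a b c d : ℕ} (h₁ : a ≤ c) (h₂ : b < d) :
    Prod.Lex (· < ·) (· < ·) (a, b) (c, d) := by
  rw [Prod.lex_def]; omega

/-- Robinson's unification algorithm. -/
theorem exists_isMGUEqns : ∀ E : List (Term V Fn × Term V Fn), (∃ υ, Unifies υ E) →
    ∃ σ, IsMGUEqns σ E
  | [], _ => ⟨_, isMGUEqns_nil⟩
  | (.var x, t) :: E, ⟨υ, hυ⟩ => by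
    classical
    obtain ⟨hυx, hυE⟩ := unifies_cons.1 hυ
    by_cases hx : x ∈ t.vars
    · obtain rfl := Term.eq_var_of_subst_eq hx (by simpa using hυx)
      obtain ⟨σ, hσ⟩ := exists_isMGUEqns E ⟨υ, hυE⟩
      exact ⟨σ, hσ.of_unifies_iff fun δ => by simp [unifies_cons]⟩
    · have hυ' : Unifies υ (substEqns (Subst.single x t) E) := by
        rwa [unifies_substEqns, Subst.single_comp_of_eq (by simpa using hυx)]
      obtain ⟨σ, hσ⟩ := exists_isMGUEqns _ ⟨υ, hυ'⟩
      exact ⟨_, isMGUEqns_cons_var hx hσ⟩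
  | (.app f ss, .var y) :: E, ⟨υ, hυ⟩ => by
    classical
    obtain ⟨hυy, hυE⟩ := unifies_cons.1 hυ
    have hy : y ∉ (Term.app f ss).vars := fun hy =>
      nomatch Term.eq_var_of_subst_eq hy (by simpa using hυy.symm)
    have hυ' : Unifies υ (substEqns (Subst.single y (.app f ss)) E) := by
      rwa [unifies_substEqns, Subst.single_comp_of_eq (by simpa using hυy.symm)]
    obtain ⟨σ, hσ⟩ := exists_isMGUEqns _ ⟨υ, hυ'⟩
    exact ⟨_, (isMGUEqns_cons_var hy hσ).of_unifies_iff fun δ => unifies_cons_swap⟩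
  | (.app f ss, .app g ts) :: E, ⟨υ, hυ⟩ => by
    obtain ⟨rfl, hmap⟩ : f = g ∧ ss.map (Term.subst υ) = ts.map (Term.subst υ) := by
      simpa using (unifies_cons.1 hυ).1
    have hlen : ss.length = ts.length := by simpa using congrArg List.length hmap
    obtain ⟨σ, hσ⟩ := exists_isMGUEqns (ss.zip ts ++ E) ⟨υ, (unifies_cons_app_iff hlen).1 hυ⟩
    exact ⟨σ, hσ.of_unifies_iff fun δ => (unifies_cons_app_iff hlen).symm⟩
termination_by E => ((eqnsVars E).ncard, eqnsSize E)
decreasing_by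
  · exact lex_lt_of_le_of_lt (Set.ncard_le_ncard eqnsVars_subset_cons (eqnsVars_finite _))
      eqnsSize_lt_cons
  · classical
    exact Prod.Lex.left _ _ (Set.ncard_lt_ncard (eqnsVars_substEqns_ssubset hx) (eqnsVars_finite _))
  · classical
    rw [eqnsVars_cons_swap]
    exact Prod.Lex.left _ _ (Set.ncard_lt_ncard (eqnsVars_substEqns_ssubset hy) (eqnsVars_finite _))
  · exact lex_lt_of_le_of_lt (Set.ncard_le_ncard eqnsVars_zip_subset (eqnsVars_finite _))
      (eqnsSize_zip_lt hlen)

end Unification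

section Literals
variable {V Fn P : Type}

theorem Lit.subst_subst (σ γ : Subst V Fn) (l : Lit V Fn P) :
    (l.subst σ).subst γ = l.subst (σ.comp γ) := by
  simp [Lit.subst, Atom.subst, Term.subst_subst]

theorem Lit.subst_congr {σ σ' : Subst V Fn} {l : Lit V Fn P}
    (h : ∀ v ∈ l.vars, σ v = σ' v) : l.subst σ = l.subst σ' := by
  simp only [Lit.subst, Atom.subst, Lit.mk.injEq, Atom.mk.injEq, true_and]
  exact List.map_congr_left fun t ht => Term.subst_congr fun v hv => h v ⟨t, ht, hv⟩

@[simp] theorem Lit.compl_compl (l : Lit V Fn P) : l.compl.compl = l := by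
  simp [Lit.compl]

theorem Lit.compl_subst (σ : Subst V Fn) (l : Lit V Fn P) :
    l.compl.subst σ = (l.subst σ).compl := rfl

theorem Lit.subst_eq_subst_iff {υ δ : Subst V Fn} {l₁ l₂ : Lit V Fn P}
    (hυ : l₁.subst υ = l₂.subst υ) :
    l₁.subst δ = l₂.subst δ ↔ Unifies δ (l₁.atom.args.zip l₂.atom.args) := by
  simp only [Lit.subst, Atom.subst, Lit.mk.injEq, Atom.mk.injEq,
    List.map_eq_map_iff_forall_zip] at hυ ⊢
  simp [hυ, Unifies]

theorem isUnifier_cons_iff {δ : Subst V Fn} {l₀ : Lit V Fn P} {ls : List (Lit V Fn P)} :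
    IsUnifier δ (l₀ :: ls) ↔ ∀ l ∈ l₀ :: ls, l₀.subst δ = l.subst δ :=
  ⟨fun h l hl => h l₀ List.mem_cons_self l hl,
    fun h l₁ h₁ l₂ h₂ => (h l₁ h₁).symm.trans (h l₂ h₂)⟩

theorem exists_isMGU (ls : List (Lit V Fn P)) (h : ∃ υ, IsUnifier υ ls) : ∃ σ, IsMGU σ ls := by
  obtain ⟨υ, hυ⟩ := h
  cases ls with
  | nil => exact ⟨fun v => .var v, by simp [IsUnifier], fun τ _ => ⟨τ, Subst.var_comp τ⟩⟩
  | cons l₀ ls =>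
    have hυ₀ := isUnifier_cons_iff.1 hυ
    have key : ∀ δ, Unifies δ ((l₀ :: ls).flatMap fun l => l₀.atom.args.zip l.atom.args) ↔
        IsUnifier δ (l₀ :: ls) := fun δ => by
      rw [unifies_flatMap, isUnifier_cons_iff]
      exact forall₂_congr fun l hl => (Lit.subst_eq_subst_iff (hυ₀ l hl)).symm
    obtain ⟨σ, hσ⟩ := exists_isMGUEqns _ ⟨υ, (key υ).2 hυ⟩
    exact ⟨σ, (key σ).1 hσ.1, fun τ hτ => hσ.2 τ ((key τ).2 hτ)⟩

theorem Clause.subst_subst (σ γ : Subst V Fn) (C : Clause V Fn P) :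
    (C.subst σ).subst γ = C.subst (σ.comp γ) := by
  simp [Clause.subst, Multiset.map_map, Lit.subst_subst]

theorem Clause.subst_congr {σ σ' : Subst V Fn} {C : Clause V Fn P}
    (h : ∀ l ∈ C, l.subst σ = l.subst σ') : C.subst σ = C.subst σ' :=
  Multiset.map_congr rfl h

theorem Clause.mem_subst_of_mem {σ : Subst V Fn} {C : Clause V Fn P} {l : Lit V Fn P}
    (h : l ∈ C) : l.subst σ ∈ C.subst σ :=
  Multiset.mem_map_of_mem _ h

theorem Clause.subst_add (σ : Subst V Fn) (C D : Clause V Fn P) :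
    (C + D).subst σ = C.subst σ + D.subst σ :=
  Multiset.map_add _ _ _

theorem Clause.subst_cons (σ : Subst V Fn) (l : Lit V Fn P) (C : Clause V Fn P) :
    Clause.subst σ (l ::ₘ C) = l.subst σ ::ₘ C.subst σ :=
  Multiset.map_cons _ _ _

theorem Clause.ValidEF.subst {C : Clause V Fn P} (h : C.ValidEF) (σ : Subst V Fn) :
    (C.subst σ).ValidEF := by
  obtain ⟨A, hpos, hneg⟩ := h
  exact ⟨A.subst σ, Clause.mem_subst_of_mem hpos, Clause.mem_subst_of_mem hneg⟩

theorem Clause.ValidEF.satC {C : Clause V Fn P} (h : C.ValidEF) (β : PAssign V Fn P) :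
    satC β C := by
  obtain ⟨A, hpos, hneg⟩ := h
  cases hA : β A
  · exact ⟨_, hneg, hA⟩
  · exact ⟨_, hpos, hA⟩

end Literals

section Assignments
variable {V Fn P : Type}

theorem litTrue_compl_iff {β : PAssign V Fn P} {l : Lit V Fn P} :
    litTrue β l.compl ↔ ¬ litTrue β l := by
  cases h : β l.atom <;> cases hl : l.pol <;> simp [litTrue, Lit.compl, h, hl]

theorem Lit.eq_of_litTrue {β : PAssign V Fn P} {l₁ l₂ : Lit V Fn P} (h₁ : litTrue β l₁)
    (h₂ : litTrue β l₂) (h : l₁.atom = l₂.atom) : l₁ = l₂ := by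
  cases l₁; cases l₂
  simp_all [litTrue]

theorem flipAtom_of_ne {β : PAssign V Fn P} {A A₀ : Atom V Fn P} (h : A ≠ A₀) :
    flipAtom β A₀ A = β A := if_neg h

theorem flipAtom_self (β : PAssign V Fn P) (A₀ : Atom V Fn P) :
    flipAtom β A₀ A₀ = !β A₀ := if_pos rfl

theorem litTrue_flipAtom_of_ne {β : PAssign V Fn P} {A₀ : Atom V Fn P} {l : Lit V Fn P}
    (h : l.atom ≠ A₀) : litTrue (flipAtom β A₀) l ↔ litTrue β l := by
  rw [litTrue, litTrue, flipAtom_of_ne h]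

theorem ncard_flipAtom_lt {β : PAssign V Fn P} {T : Set (Atom V Fn P)} {A₀ : Atom V Fn P}
    {b : Bool} (hT : T.Finite) (hA₀ : A₀ ∈ T) (hb : β A₀ ≠ b) :
    {A ∈ T | flipAtom β A₀ A ≠ b}.ncard < {A ∈ T | β A ≠ b}.ncard := by
  have : {A ∈ T | flipAtom β A₀ A ≠ b} = {A ∈ T | β A ≠ b} \ {A₀} := by
    ext A
    by_cases hA : A = A₀
    · subst hA; cases b <;> simp_all [flipAtom_self]
    · simp [flipAtom_of_ne hA, hA]
  rw [this]
  exact Set.ncard_sdiff_singleton_lt_of_mem ⟨hA₀, hb⟩ (hT.subset (Set.sep_subset _ _))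

end Assignments

section Blocked
variable {V Fn P : Type}

theorem exists_subst_eq_on_disjoint {C D : Clause V Fn P} (h : C.vars ∩ D.vars = ∅)
    (τ τ' : Subst V Fn) :
    ∃ θ : Subst V Fn, (∀ l ∈ C, l.subst θ = l.subst τ) ∧ ∀ l ∈ D, l.subst θ = l.subst τ' := by
  classical
  refine ⟨fun v => if v ∈ C.vars then τ v else τ' v, fun l hl => ?_, fun l hl => ?_⟩
  · exact Lit.subst_congr fun v hv => if_pos ⟨l, hl, hv⟩
  · exact Lit.subst_congr fun v hv => if_neg fun hC => h.subset ⟨hC, l, hl, hv⟩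

/-- `C'τ + Drτ'` is the resolvent of `(L ∨ C')τ` and `Dτ'` on `Lτ`; it is an instance of an
`L`-resolvent of `L ∨ C'` and `D` in the sense of `BlockedEF`, hence valid. -/
theorem BlockedEF.validEF_instance {F : Set (Clause V Fn P)} {L : Lit V Fn P}
    {C' D : Clause V Fn P} (hbl : BlockedEF L C' F) (hD : D ∈ F) (hDne : D ≠ L ::ₘ C')
    (hdisj : Clause.vars (L ::ₘ C') ∩ D.vars = ∅) {τ τ' : Subst V Fn}
    (hmem : (L.subst τ).compl ∈ D.subst τ') :
    ∃ Dr ≤ D, (∀ N ∈ Dr, N.subst τ' ≠ (L.subst τ).compl) ∧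
      (C'.subst τ + Dr.subst τ').ValidEF := by
  classical
  set Ns := D.filter fun N => N.subst τ' = (L.subst τ).compl
  set Dr := D.filter fun N => N.subst τ' ≠ (L.subst τ).compl
  have hNs : Ns ≠ 0 := by
    obtain ⟨N, hN, hNe⟩ := Multiset.mem_map.1 hmem
    exact fun h0 => Multiset.notMem_zero N (h0 ▸ Multiset.mem_filter.2 ⟨hN, hNe⟩)
  obtain ⟨θ, hθC, hθD⟩ := exists_subst_eq_on_disjoint hdisj τ τ'
  have hθ : IsUnifier θ (L :: (Ns.map Lit.compl).toList) := by
    refine isUnifier_cons_iff.2 fun l hl => ?_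
    rw [hθC L (Multiset.mem_cons_self _ _)]
    rcases List.mem_cons.1 hl with rfl | hl
    · exact (hθC l (Multiset.mem_cons_self _ _)).symm
    obtain ⟨N, hN, rfl⟩ := Multiset.mem_map.1 (Multiset.mem_toList.1 hl)
    obtain ⟨hND, hNe⟩ := Multiset.mem_filter.1 hN
    rw [Lit.compl_subst, hθD N hND, hNe, Lit.compl_compl]
  obtain ⟨σ, hσ⟩ := exists_isMGU _ ⟨θ, hθ⟩
  obtain ⟨γ, rfl⟩ := hσ.2 θ hθ
  have hvalid := (hbl D hD hDne Ns Dr (Multiset.filter_add_not _ D) hNs σ hσ).subst γ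
  rw [Clause.subst_add, Clause.subst_subst, Clause.subst_subst,
    Clause.subst_congr fun l hl => hθC l (Multiset.mem_cons_of_mem hl),
    Clause.subst_congr fun l hl => hθD l (Multiset.mem_of_mem_filter hl)] at hvalid
  exact ⟨Dr, Multiset.filter_le _ D, fun N hN => (Multiset.mem_filter.1 hN).2, hvalid⟩

theorem BlockedEF.satC_flipAtom {F : Set (Clause V Fn P)} {L : Lit V Fn P}
    {C' D : Clause V Fn P} (hbl : BlockedEF L C' F) (hD : D ∈ F) (hDne : D ≠ L ::ₘ C')
    (hdisj : Clause.vars (L ::ₘ C') ∩ D.vars = ∅) {β : PAssign V Fn P} {τ τ' : Subst V Fn}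
    (hC : ¬ satC β (Clause.subst τ (L ::ₘ C'))) (hDsat : satC β (D.subst τ')) :
    satC (flipAtom β (L.atom.subst τ)) (D.subst τ') := by
  obtain ⟨l, hl, hlt⟩ := hDsat
  by_cases hla : l.atom = L.atom.subst τ
  swap
  · exact ⟨l, hl, (litTrue_flipAtom_of_ne hla).2 hlt⟩
  have hLτ : litTrue β (L.subst τ).compl := litTrue_compl_iff.2 fun h =>
    hC ⟨L.subst τ, Clause.mem_subst_of_mem (Multiset.mem_cons_self _ _), h⟩
  obtain rfl : l = (L.subst τ).compl := Lit.eq_of_litTrue hlt hLτ hla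
  obtain ⟨Dr, hDr, hDrne, hvalid⟩ := hbl.validEF_instance hD hDne hdisj hl
  obtain ⟨m, hm, hmt⟩ := hvalid.satC β
  rcases Multiset.mem_add.1 hm with hm | hm
  · exact absurd ⟨m, by rw [Clause.subst_cons]; exact Multiset.mem_cons_of_mem hm, hmt⟩ hC
  obtain ⟨N, hN, rfl⟩ := Multiset.mem_map.1 hm
  have hNa : (N.subst τ').atom ≠ L.atom.subst τ := fun h =>
    hDrne N hN (Lit.eq_of_litTrue hmt hLτ h)
  exact ⟨N.subst τ', Clause.mem_subst_of_mem (Multiset.subset_of_le hDr hN),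
    (litTrue_flipAtom_of_ne hNa).2 hmt⟩

theorem BlockedEF.exists_satC_of_flips {F F' FC : Set (Clause V Fn P)} {L : Lit V Fn P}
    {C' : Clause V Fn P} (hbl : BlockedEF L C' F)
    (hdisj : ∀ D ∈ F, D ≠ L ::ₘ C' → Clause.vars (L ::ₘ C') ∩ Clause.vars D = ∅)
    (hF' : ∀ G ∈ F', ∃ D ∈ F, D ≠ L ::ₘ C' ∧ ∃ τ, G = Clause.subst τ D)
    (hFC : FC.Finite) (hFCinst : ∀ G ∈ FC, ∃ τ, G = Clause.subst τ (L ::ₘ C'))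
    (β : PAssign V Fn P) (hβ : ∀ G ∈ F', satC β G) :
    ∃ β' : PAssign V Fn P, (∀ G ∈ F', satC β' G) ∧ (∀ G ∈ FC, satC β' G) ∧
      ∀ A : Atom V Fn P, (∀ δ : Subst V Fn, A ≠ L.atom.subst δ) → β' A = β A := by
  set T : Set (Atom V Fn P) := ⋃ G ∈ FC, Lit.atom '' {l | l ∈ G}
  have hT : T.Finite := hFC.biUnion fun G _ => (G.finite_toSet).image _
  induction h : {A ∈ T | β A ≠ L.pol}.ncard using Nat.strong_induction_on generalizing β
    with | _ n ih => ?_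
  by_cases hsat : ∀ G ∈ FC, satC β G
  · exact ⟨β, hβ, hsat, fun _ _ => rfl⟩
  push Not at hsat
  obtain ⟨G, hG, hGns⟩ := hsat
  obtain ⟨τ, rfl⟩ := hFCinst G hG
  have hLG : L.subst τ ∈ Clause.subst τ (L ::ₘ C') :=
    Clause.mem_subst_of_mem (Multiset.mem_cons_self _ _)
  have hLτ : β (L.atom.subst τ) ≠ L.pol := fun h => hGns ⟨L.subst τ, hLG, h⟩
  have hflip : ∀ H ∈ F', satC (flipAtom β (L.atom.subst τ)) H := fun H hH => by
    obtain ⟨D, hD, hDne, τ', rfl⟩ := hF' H hH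
    exact hbl.satC_flipAtom hD hDne (hdisj D hD hDne) hGns (hβ _ hH)
  have hmem : L.atom.subst τ ∈ T := Set.mem_biUnion hG ⟨_, hLG, rfl⟩
  obtain ⟨β', h₁, h₂, h₃⟩ := ih _ (h ▸ ncard_flipAtom_lt hT hmem hLτ) _ hflip rfl
  exact ⟨β', h₁, h₂, fun A hA => (h₃ A hA).trans (flipAtom_of_ne (hA τ))⟩

end Blocked

/-- If `C = L ∨ C'` is blocked by `L` in `F`, `F'` a finite set of ground instances of clauses
of `F \ {C}` and `FC` a finite set of ground instances of `C`, then every propositional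
assignment satisfying `F'` can be modified — changing only ground instances of the atom of
`L` — into one satisfying `F' ∪ FC`. -/
theorem stmt6 {V Fn P : Type} (F : Set (Clause V Fn P)) (L : Lit V Fn P) (C' : Clause V Fn P)
    (hdisj : ∀ D ∈ F, D ≠ L ::ₘ C' → Clause.vars (L ::ₘ C') ∩ Clause.vars D = ∅)
    (hbl : BlockedEF L C' F)
    (F' FC : Set (Clause V Fn P))
    (hF' : F'.Finite ∧ ∀ G ∈ F', G.IsGround ∧ ∃ D ∈ F, D ≠ L ::ₘ C' ∧ ∃ τ, G = Clause.subst τ D)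
    (hFC : FC.Finite ∧ ∀ G ∈ FC, G.IsGround ∧ ∃ τ, G = Clause.subst τ (L ::ₘ C'))
    (α : PAssign V Fn P) (hα : ∀ G ∈ F', satC α G) :
    ∃ α' : PAssign V Fn P,
      (∀ G ∈ F' ∪ FC, satC α' G) ∧
      ∀ A : Atom V Fn P, (∀ δ : Subst V Fn, A ≠ L.atom.subst δ) → α' A = α A := by
  obtain ⟨α', hF'sat, hFCsat, hagree⟩ := hbl.exists_satC_of_flips hdisj
    (fun G hG => (hF'.2 G hG).2) hFC.1 (fun G hG => (hFC.2 G hG).2) α hα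
  exact ⟨α', fun G hG => hG.elim (hF'sat G) (hFCsat G), hagree⟩
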